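/- arXiv:2401.10572 — 3 statements merged into one kernel-verified Lean document; each statement's English description precedes it below -/
import Mathlib

section
/- Fix λ ∈ (0,1] and C > 0. Suppose m, n : (0,1] → ℝ satisfy m(h)/h → 0 and n(h)/h → 0 as h → 0+. Then for every ε > 0 there exists δ > 0 such that for every sequence (h_j) with 0 < h_j ≤ δ for all j and ∑_j h_j = ∞, and every choice of signs k_i(h_j) ∈ {m(h_j), n(h_j)}, one has | ∑_{i=1}^∞ (∏_{j=1}^{i-1} (1 − λ h_j + k_i(h_j))) h_i − 1/λ | ≤ ε, provided δ is small enough that 0 < λ ± sup_j |m(h_j)|/h_j, |n(h_j)|/h_j < 1. -/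
/-!
For a fine enough mesh, `|k_i(h_j)| ≤ η h_j`, so every factor `1 - λ h_j + k_i(h_j)` lies between
`1 - (λ + η) h_j` and `1 - (λ - η) h_j`, and the perturbed sum is squeezed between the unperturbed
sums at the rates `λ ± η`. These telescope,
`μ ∑_{i<N} ∏_{j<i} (1 - μ h_j) h_i = 1 - ∏_{j<N} (1 - μ h_j)`, and the product tends to `0`
since it is at most `exp (-μ ∑_{j<N} h_j)`. So the sum lies in `[1/(λ + η), 1/(λ - η)]`, which is
within `ε` of `1/λ` once `η` is small.
-/

open Filter Finset Topology

theorem mul_sum_range_prod_one_sub_mul {R : Type*} [CommRing R] (μ : R) (h : ℕ → R) (N : ℕ) :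
    μ * ∑ i ∈ range N, (∏ j ∈ range i, (1 - μ * h j)) * h i
      = 1 - ∏ j ∈ range N, (1 - μ * h j) := by
  induction N with
  | zero => simp
  | succ N ih =>
    rw [sum_range_succ, prod_range_succ, mul_add, ih]
    ring

theorem tendsto_prod_range_one_sub_of_tendsto_sum {a : ℕ → ℝ} (ha : ∀ j, a j ≤ 1)
    (hsum : Tendsto (fun N => ∑ j ∈ range N, a j) atTop atTop) :
    Tendsto (fun N => ∏ j ∈ range N, (1 - a j)) atTop (𝓝 0) := by
  have hexp : Tendsto (fun N => Real.exp (-∑ j ∈ range N, a j)) atTop (𝓝 0) :=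
    Real.tendsto_exp_atBot.comp (tendsto_neg_atTop_atBot.comp hsum)
  refine tendsto_of_tendsto_of_tendsto_of_le_of_le tendsto_const_nhds hexp
    (fun N => prod_nonneg fun j _ => sub_nonneg.2 (ha j)) fun N => ?_
  calc ∏ j ∈ range N, (1 - a j) ≤ ∏ j ∈ range N, Real.exp (-a j) :=
        prod_le_prod (fun j _ => sub_nonneg.2 (ha j)) fun j _ => Real.one_sub_le_exp_neg (a j)
    _ = Real.exp (-∑ j ∈ range N, a j) := by rw [← Real.exp_sum, sum_neg_distrib]

theorem hasSum_prod_range_one_sub_mul_mul {h : ℕ → ℝ} {μ : ℝ} (hh : ∀ j, 0 ≤ h j)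
    (hμ : 0 < μ) (hμh : ∀ j, μ * h j ≤ 1)
    (hdiv : Tendsto (fun N => ∑ j ∈ range N, h j) atTop atTop) :
    HasSum (fun i => (∏ j ∈ range i, (1 - μ * h j)) * h i) μ⁻¹ := by
  have hprod : Tendsto (fun N => ∏ j ∈ range N, (1 - μ * h j)) atTop (𝓝 0) :=
    tendsto_prod_range_one_sub_of_tendsto_sum hμh <| by
      simpa only [← mul_sum] using hdiv.const_mul_atTop hμ
  rw [hasSum_iff_tendsto_nat_of_nonneg
    (fun i => mul_nonneg (prod_nonneg fun j _ => sub_nonneg.2 (hμh j)) (hh i))]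
  have hpartial (N : ℕ) : ∑ i ∈ range N, (∏ j ∈ range i, (1 - μ * h j)) * h i
      = μ⁻¹ * (1 - ∏ j ∈ range N, (1 - μ * h j)) := by
    rw [← mul_sum_range_prod_one_sub_mul, inv_mul_cancel_left₀ hμ.ne']
  simpa only [hpartial, sub_zero, mul_one] using
    ((tendsto_const_nhds (x := (1:ℝ))).sub hprod).const_mul μ⁻¹

theorem tsum_prod_range_mul_mem_Icc {h : ℕ → ℝ} {μ₁ μ₂ : ℝ} (hh : ∀ j, 0 ≤ h j)
    (hμ₁ : 0 < μ₁) (hμ₂ : 0 < μ₂) (hμ₂h : ∀ j, μ₂ * h j ≤ 1)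
    (hdiv : Tendsto (fun N => ∑ j ∈ range N, h j) atTop atTop) {c : ℕ → ℕ → ℝ}
    (hc : ∀ i j, 1 - μ₂ * h j ≤ c i j ∧ c i j ≤ 1 - μ₁ * h j) :
    ∑' i, (∏ j ∈ range i, c i j) * h i ∈ Set.Icc μ₂⁻¹ μ₁⁻¹ := by
  have hμ₁h (j : ℕ) : μ₁ * h j ≤ 1 := by linarith [hc 0 j, hμ₂h j]
  have hc₀ (i j : ℕ) : 0 ≤ c i j := by linarith [hc i j, hμ₂h j]
  have hlo (i : ℕ) : (∏ j ∈ range i, (1 - μ₂ * h j)) * h i ≤ (∏ j ∈ range i, c i j) * h i :=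
    mul_le_mul_of_nonneg_right
      (prod_le_prod (fun j _ => sub_nonneg.2 (hμ₂h j)) fun j _ => (hc i j).1) (hh i)
  have hhi (i : ℕ) : (∏ j ∈ range i, c i j) * h i ≤ (∏ j ∈ range i, (1 - μ₁ * h j)) * h i :=
    mul_le_mul_of_nonneg_right (prod_le_prod (fun j _ => hc₀ i j) fun j _ => (hc i j).2) (hh i)
  have hS₁ := hasSum_prod_range_one_sub_mul_mul hh hμ₁ hμ₁h hdiv
  have hS₂ := hasSum_prod_range_one_sub_mul_mul hh hμ₂ hμ₂h hdiv
  have hS : Summable fun i => (∏ j ∈ range i, c i j) * h i :=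
    hS₁.summable.of_nonneg_of_le (fun i => mul_nonneg (prod_nonneg fun j _ => hc₀ i j) (hh i)) hhi
  exact ⟨hasSum_le hlo hS₂ hS.hasSum, hasSum_le hhi hS.hasSum hS₁⟩

theorem eventually_abs_le_mul_of_tendsto_div {f : ℝ → ℝ}
    (hf : Tendsto (fun x => f x / x) (𝓝[>] 0) (𝓝 0)) {η : ℝ} (hη : 0 < η) :
    ∀ᶠ x in 𝓝[>] 0, |f x| ≤ η * x := by
  filter_upwards [hf.eventually (Metric.closedBall_mem_nhds 0 hη), self_mem_nhdsWithin]
    with x hx (hx₀ : 0 < x)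
  rwa [Real.dist_eq, sub_zero, abs_div, abs_of_pos hx₀, div_le_iff₀ hx₀] at hx

theorem exists_pos_abs_inv_add_sub_inv_le {l ε : ℝ} (hl : 0 < l) (hε : 0 < ε) :
    ∃ η > 0, η < l ∧ |(l - η)⁻¹ - l⁻¹| ≤ ε ∧ |(l + η)⁻¹ - l⁻¹| ≤ ε := by
  have hinv : ∀ᶠ μ in 𝓝 l, |μ⁻¹ - l⁻¹| ≤ ε := by
    filter_upwards [(tendsto_inv₀ hl.ne').eventually (Metric.closedBall_mem_nhds _ hε)] with μ hμ
    rwa [Real.dist_eq] at hμ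
  have hsmall : ∀ᶠ η in 𝓝 0, η < l ∧ |(l - η)⁻¹ - l⁻¹| ≤ ε ∧ |(l + η)⁻¹ - l⁻¹| ≤ ε :=
    (eventually_lt_nhds hl).and
      ((((continuous_sub_left l).tendsto' 0 l (sub_zero l)).eventually hinv).and
        (((continuous_const_add l).tendsto' 0 l (add_zero l)).eventually hinv))
  have hpos : ∀ᶠ η in 𝓝[>] 0, 0 < η ∧ η < l ∧ |(l - η)⁻¹ - l⁻¹| ≤ ε ∧ |(l + η)⁻¹ - l⁻¹| ≤ ε :=
    Filter.Eventually.and self_mem_nhdsWithin (hsmall.filter_mono nhdsWithin_le_nhds)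
  exact hpos.exists

theorem perturbed_discount_sum_general (l : ℝ) (hl : l ∈ Set.Ioc (0:ℝ) 1)
    (m n : ℝ → ℝ)
    (hm : Tendsto (fun h => m h / h) (nhdsWithin 0 (Set.Ioi 0)) (nhds 0))
    (hn : Tendsto (fun h => n h / h) (nhdsWithin 0 (Set.Ioi 0)) (nhds 0)) :
    ∀ ε > (0:ℝ), ∃ δ > (0:ℝ),
      ∀ h : ℕ → ℝ, (∀ j, 0 < h j ∧ h j ≤ δ) →
        Tendsto (fun N => ∑ j ∈ Finset.range N, h j) atTop atTop →
        (∀ j, 0 < l - |m (h j)| / h j ∧ l + |m (h j)| / h j < 1 ∧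
              0 < l - |n (h j)| / h j ∧ l + |n (h j)| / h j < 1) →
        ∀ k : ℕ → ℕ → ℝ, (∀ i j, k i j = m (h j) ∨ k i j = n (h j)) →
        |∑' i : ℕ, (∏ j ∈ Finset.range i, (1 - l * h j + k i j)) * h i - 1 / l| ≤ ε := by
  intro ε hε
  obtain ⟨η, hη, hηl, hup, hlo⟩ := exists_pos_abs_inv_add_sub_inv_le hl.1 hε
  obtain ⟨δ, hδ, hsmall⟩ := mem_nhdsGT_iff_exists_Ioc_subset.mp
    ((eventually_abs_le_mul_of_tendsto_div hm hη).and (eventually_abs_le_mul_of_tendsto_div hn hη))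
  refine ⟨min δ (l + η)⁻¹, lt_min hδ (inv_pos.2 (by linarith [hl.1])), fun h hh hdiv _ k hk => ?_⟩
  have hk_le (i j : ℕ) : |k i j| ≤ η * h j := by
    have := hsmall ⟨(hh j).1, (hh j).2.trans (min_le_left _ _)⟩
    rcases hk i j with hkm | hkn
    · exact hkm ▸ this.1
    · exact hkn ▸ this.2
  have hμ₂h (j : ℕ) : (l + η) * h j ≤ 1 := by
    have := (hh j).2.trans (min_le_right _ _)
    rwa [← one_div, le_div_iff₀' (by linarith [hl.1])] at this
  obtain ⟨hlower, hupper⟩ := tsum_prod_range_mul_mem_Icc (fun j => (hh j).1.le) (sub_pos.2 hηl)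
    (by linarith [hl.1]) hμ₂h hdiv (c := fun i j => 1 - l * h j + k i j) fun i j => by
      constructor <;> linarith [abs_le.1 (hk_le i j)]
  rw [one_div, abs_le]
  constructor <;> linarith [abs_le.1 hup, abs_le.1 hlo]

/-- perturbed discounted sums converge to `1/λ` uniformly over
fine partitions, for perturbations `k_i(h_j) ∈ {m(h_j), n(h_j)}` with
`m(h)/h → 0` and `n(h)/h → 0`. -/
theorem perturbed_discount_sum (l : ℝ) (hl : l ∈ Set.Ioc (0:ℝ) 1) (C : ℝ) (hC : 0 < C)
    (m n : ℝ → ℝ)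
    (hm : Tendsto (fun h => m h / h) (nhdsWithin 0 (Set.Ioi 0)) (nhds 0))
    (hn : Tendsto (fun h => n h / h) (nhdsWithin 0 (Set.Ioi 0)) (nhds 0)) :
    ∀ ε > (0:ℝ), ∃ δ > (0:ℝ),
      ∀ h : ℕ → ℝ, (∀ j, 0 < h j ∧ h j ≤ δ) →
        Tendsto (fun N => ∑ j ∈ Finset.range N, h j) atTop atTop →
        (∀ j, 0 < l - |m (h j)| / h j ∧ l + |m (h j)| / h j < 1 ∧
              0 < l - |n (h j)| / h j ∧ l + |n (h j)| / h j < 1) →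
        ∀ k : ℕ → ℕ → ℝ, (∀ i j, k i j = m (h j) ∨ k i j = n (h j)) →
        |∑' i : ℕ, (∏ j ∈ Finset.range i, (1 - l * h j + k i j)) * h i - 1 / l| ≤ ε :=
  perturbed_discount_sum_general l hl m n hm hn
end

section
/- Let λ ∈ (0,∞) and let α, β : (0,1] → [0,1) be two admissible families of discount factors with the same asymptotic discount rate λ, i.e. α(h)/h → λ and β(h)/h → λ as h → 0+. Let C > 0. Then for every ε > 0 there exists δ > 0 such that for every partition with stage durations h_i ∈ (0,δ], ∑_i h_i = ∞, and every stream (g_i) with |g_i| ≤ C h_i, one has |∑_{i=1}^∞ (∏_{j=1}^{i-1}(1−α(h_j))) g_i − ∑_{i=1}^∞ (∏_{j=1}^{i-1}(1−β(h_j))) g_i| ≤ ε. -/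
/-!
For small stage durations `h`, both `α h` and `β h` lie between `(l - η) h` and `(l + η) h`, so
both discount weights `∏_{j<i} (1 - α (h j))` and `∏_{j<i} (1 - β (h j))` lie between the weights
`L i` and `U i` of the constant rates `l + η` and `l - η`. For a constant rate `r` the weights `P`
telescope, `∑_{i<N} P i · r h i = 1 - P N`, and `P N ≤ exp (-r ∑_{j<N} h j) → 0`, so
`∑ P i h i = r⁻¹`. Hence the two evaluations differ by at most
`C ∑ (U i - L i) h i = C ((l - η)⁻¹ - (l + η)⁻¹)`, which tends to `0` with `η`.
-/

open Filter Topology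

theorem Finset.prod_one_sub_mem_Icc {ι : Type*} (s : Finset ι) {a b c : ι → ℝ}
    (hac : ∀ i ∈ s, a i ≤ c i) (hcb : ∀ i ∈ s, c i ≤ b i) (hb : ∀ i ∈ s, b i ≤ 1) :
    ∏ i ∈ s, (1 - c i) ∈ Set.Icc (∏ i ∈ s, (1 - b i)) (∏ i ∈ s, (1 - a i)) :=
  ⟨Finset.prod_le_prod (fun i hi => sub_nonneg.2 (hb i hi)) fun i hi => by linarith [hcb i hi],
    Finset.prod_le_prod (fun i hi => by linarith [hcb i hi, hb i hi])
      fun i hi => by linarith [hac i hi]⟩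

theorem sum_range_prod_one_sub_mul (c : ℕ → ℝ) (N : ℕ) :
    ∑ i ∈ Finset.range N, (∏ j ∈ Finset.range i, (1 - c j)) * c i
      = 1 - ∏ j ∈ Finset.range N, (1 - c j) := by
  induction N with
  | zero => simp
  | succ n ih => rw [Finset.sum_range_succ, Finset.prod_range_succ, ih]; ring

theorem prod_range_one_sub_le_exp_neg_sum {c : ℕ → ℝ} (hc : ∀ j, c j ≤ 1) (N : ℕ) :
    ∏ j ∈ Finset.range N, (1 - c j) ≤ Real.exp (-∑ j ∈ Finset.range N, c j) := by
  rw [← Finset.sum_neg_distrib, Real.exp_sum]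
  exact Finset.prod_le_prod (fun j _ => sub_nonneg.2 (hc j)) fun j _ => Real.one_sub_le_exp_neg _

theorem tendsto_prod_range_one_sub_zero {c : ℕ → ℝ} (hc : ∀ j, c j ≤ 1)
    (hdiv : Tendsto (fun N => ∑ j ∈ Finset.range N, c j) atTop atTop) :
    Tendsto (fun N => ∏ j ∈ Finset.range N, (1 - c j)) atTop (𝓝 0) :=
  squeeze_zero (fun _ => Finset.prod_nonneg fun j _ => sub_nonneg.2 (hc j))
    (prod_range_one_sub_le_exp_neg_sum hc)
    (Real.tendsto_exp_atBot.comp (tendsto_neg_atTop_atBot.comp hdiv))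

theorem hasSum_prod_range_one_sub_mul {c : ℕ → ℝ} (hc : ∀ j, 0 ≤ c j ∧ c j ≤ 1)
    (hdiv : Tendsto (fun N => ∑ j ∈ Finset.range N, c j) atTop atTop) :
    HasSum (fun i => (∏ j ∈ Finset.range i, (1 - c j)) * c i) 1 := by
  have hc1 : ∀ j, c j ≤ 1 := fun j => (hc j).2
  rw [hasSum_iff_tendsto_nat_of_nonneg
    (fun i => mul_nonneg (Finset.prod_nonneg fun j _ => sub_nonneg.2 (hc1 j)) (hc i).1)]
  simp only [sum_range_prod_one_sub_mul]
  simpa using (tendsto_prod_range_one_sub_zero hc1 hdiv).const_sub 1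

theorem hasSum_prod_range_one_sub_const_mul_mul {r : ℝ} {h : ℕ → ℝ} (hr : 0 < r)
    (hh : ∀ j, 0 ≤ h j ∧ r * h j ≤ 1)
    (hdiv : Tendsto (fun N => ∑ j ∈ Finset.range N, h j) atTop atTop) :
    HasSum (fun i => (∏ j ∈ Finset.range i, (1 - r * h j)) * h i) r⁻¹ := by
  have hrh : Tendsto (fun N => ∑ j ∈ Finset.range N, r * h j) atTop atTop := by
    simpa only [← Finset.mul_sum] using hdiv.const_mul_atTop hr
  have := (hasSum_prod_range_one_sub_mul
    (fun j => ⟨mul_nonneg hr.le (hh j).1, (hh j).2⟩) hrh).mul_left r⁻¹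
  rw [mul_one] at this
  exact this.congr_fun fun i => by field_simp

theorem abs_tsum_mul_sub_tsum_mul_le {p q L U g h : ℕ → ℝ} {C u v : ℝ} (hL : ∀ i, 0 ≤ L i)
    (hp : ∀ i, p i ∈ Set.Icc (L i) (U i)) (hq : ∀ i, q i ∈ Set.Icc (L i) (U i))
    (hg : ∀ i, |g i| ≤ C * h i)
    (hU : HasSum (fun i => U i * h i) u) (hLs : HasSum (fun i => L i * h i) v) :
    |∑' i, p i * g i - ∑' i, q i * g i| ≤ C * (u - v) := by
  have summable : ∀ w : ℕ → ℝ, (∀ i, w i ∈ Set.Icc (L i) (U i)) → Summable (fun i => w i * g i) :=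
    fun w hw => (hU.summable.mul_left C).of_norm_bounded fun i => by
      have hwU : |w i| ≤ U i := abs_le.2 ⟨by linarith [hL i, (hw i).1, (hw i).2], (hw i).2⟩
      calc ‖w i * g i‖ = |w i| * |g i| := abs_mul _ _
        _ ≤ U i * (C * h i) := mul_le_mul hwU (hg i) (abs_nonneg _) ((abs_nonneg _).trans hwU)
        _ = C * (U i * h i) := by ring
  rw [← (summable p hp).tsum_sub (summable q hq)]
  refine ((summable p hp).sub (summable q hq)).hasSum.norm_le_of_bounded
    ((hU.sub hLs).mul_left C) fun i => ?_
  have hpq : |p i - q i| ≤ U i - L i := abs_sub_le_iff.2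
    ⟨by linarith [(hp i).2, (hq i).1], by linarith [(hp i).1, (hq i).2]⟩
  calc ‖p i * g i - q i * g i‖ = |p i - q i| * |g i| := by rw [← sub_mul]; exact abs_mul _ _
    _ ≤ (U i - L i) * (C * h i) :=
      mul_le_mul hpq (hg i) (abs_nonneg _) (by linarith [(hp i).1, (hp i).2])
    _ = C * (U i * h i - L i * h i) := by ring

theorem eventually_sub_mul_le_and_le_add_mul {γ : ℝ → ℝ} {l η : ℝ}
    (hγ : Tendsto (fun x => γ x / x) (𝓝[>] 0) (𝓝 l)) (hη : 0 < η) :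
    ∀ᶠ x in 𝓝[>] 0, (l - η) * x ≤ γ x ∧ γ x ≤ (l + η) * x := by
  filter_upwards [hγ (Ioo_mem_nhds (by linarith : l - η < l) (by linarith : l < l + η)),
    self_mem_nhdsWithin] with x hx (hx0 : 0 < x)
  exact ⟨((lt_div_iff₀ hx0).1 hx.1).le, ((div_lt_iff₀ hx0).1 hx.2).le⟩

theorem tendsto_mul_inv_sub_sub_inv_add (C : ℝ) {l : ℝ} (hl : l ≠ 0) :
    Tendsto (fun η => C * ((l - η)⁻¹ - (l + η)⁻¹)) (𝓝 0) (𝓝 0) := by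
  have : ContinuousAt (fun η => C * ((l - η)⁻¹ - (l + η)⁻¹)) 0 := by
    fun_prop (disch := simpa)
  simpa using this.tendsto

theorem admissible_discount_equiv_general (l : ℝ) (hl : 0 < l)
    (α β : ℝ → ℝ)
    (hα : Tendsto (fun h => α h / h) (nhdsWithin 0 (Set.Ioi 0)) (nhds l))
    (hβ : Tendsto (fun h => β h / h) (nhdsWithin 0 (Set.Ioi 0)) (nhds l))
    (C : ℝ) :
    ∀ ε > (0:ℝ), ∃ δ > (0:ℝ),
      ∀ h : ℕ → ℝ, (∀ j, 0 < h j ∧ h j ≤ δ) →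
        Tendsto (fun N => ∑ j ∈ Finset.range N, h j) atTop atTop →
        ∀ g : ℕ → ℝ, (∀ i, |g i| ≤ C * h i) →
        |∑' i : ℕ, (∏ j ∈ Finset.range i, (1 - α (h j))) * g i -
         ∑' i : ℕ, (∏ j ∈ Finset.range i, (1 - β (h j))) * g i| ≤ ε := by
  intro ε hε
  have hsmall : ∀ᶠ η in 𝓝 0, C * ((l - η)⁻¹ - (l + η)⁻¹) ≤ ε ∧ η < l :=
    ((tendsto_mul_inv_sub_sub_inv_add C hl.ne').eventually (ge_mem_nhds hε)).and (gt_mem_nhds hl)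
  obtain ⟨η, ⟨hηε, hηl⟩, hη⟩ :=
    ((eventually_nhdsWithin_of_eventually_nhds hsmall).and
      (self_mem_nhdsWithin (s := Set.Ioi 0))).exists
  have hfast : ∀ᶠ x in 𝓝[>] (0:ℝ), (l + η) * x ≤ 1 := eventually_nhdsWithin_of_eventually_nhds
    (((continuous_const_mul (l + η)).tendsto' 0 0 (mul_zero _)).eventually (ge_mem_nhds one_pos))
  obtain ⟨δ, hδ, hsub⟩ := mem_nhdsGT_iff_exists_Ioc_subset.1
    ((eventually_sub_mul_le_and_le_add_mul hα hη).and
      ((eventually_sub_mul_le_and_le_add_mul hβ hη).and hfast))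
  refine ⟨δ, hδ, fun h hh hdiv g hg => ?_⟩
  have hstage := fun j => hsub ⟨(hh j).1, (hh j).2⟩
  have hfast_h : ∀ j, (l + η) * h j ≤ 1 := fun j => (hstage j).2.2
  have hslow_h : ∀ j, (l - η) * h j ≤ 1 := fun j =>
    (mul_le_mul_of_nonneg_right (by linarith) (hh j).1.le).trans (hfast_h j)
  have sandwich : ∀ γ : ℝ → ℝ, (∀ j, (l - η) * h j ≤ γ (h j) ∧ γ (h j) ≤ (l + η) * h j) →
      ∀ i, ∏ j ∈ Finset.range i, (1 - γ (h j)) ∈ Set.Icc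
        (∏ j ∈ Finset.range i, (1 - (l + η) * h j)) (∏ j ∈ Finset.range i, (1 - (l - η) * h j)) :=
    fun γ hγ i => Finset.prod_one_sub_mem_Icc _ (fun j _ => (hγ j).1) (fun j _ => (hγ j).2)
      fun j _ => hfast_h j
  refine (abs_tsum_mul_sub_tsum_mul_le
    (fun i => Finset.prod_nonneg fun j _ => sub_nonneg.2 (hfast_h j))
    (sandwich α fun j => (hstage j).1) (sandwich β fun j => (hstage j).2.1) hg
    (hasSum_prod_range_one_sub_const_mul_mul (by linarith)
      (fun j => ⟨(hh j).1.le, hslow_h j⟩) hdiv)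
    (hasSum_prod_range_one_sub_const_mul_mul (by linarith)
      (fun j => ⟨(hh j).1.le, hfast_h j⟩) hdiv)).trans hηε

/-- two admissible families of discount factors with the same
asymptotic discount rate `λ` give asymptotically equal discounted evaluations
of streams bounded by `C·(stage duration)`, as the mesh tends to `0`. -/
theorem admissible_discount_equiv (l : ℝ) (hl : 0 < l)
    (α β : ℝ → ℝ)
    (hα_mem : ∀ h ∈ Set.Ioc (0:ℝ) 1, α h ∈ Set.Ico (0:ℝ) 1)
    (hβ_mem : ∀ h ∈ Set.Ioc (0:ℝ) 1, β h ∈ Set.Ico (0:ℝ) 1)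
    (hα : Tendsto (fun h => α h / h) (nhdsWithin 0 (Set.Ioi 0)) (nhds l))
    (hβ : Tendsto (fun h => β h / h) (nhdsWithin 0 (Set.Ioi 0)) (nhds l))
    (C : ℝ) (hC : 0 < C) :
    ∀ ε > (0:ℝ), ∃ δ > (0:ℝ),
      ∀ h : ℕ → ℝ, (∀ j, 0 < h j ∧ h j ≤ δ) →
        Tendsto (fun N => ∑ j ∈ Finset.range N, h j) atTop atTop →
        ∀ g : ℕ → ℝ, (∀ i, |g i| ≤ C * h i) →
        |∑' i : ℕ, (∏ j ∈ Finset.range i, (1 - α (h j))) * g i -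
         ∑' i : ℕ, (∏ j ∈ Finset.range i, (1 - β (h j))) * g i| ≤ ε :=
  admissible_discount_equiv_general l hl α β hα hβ C
end

section
/- Let Ω be a finite set and C(Ω,ℝ) the space of functions Ω → ℝ with sup norm. For i ∈ ℕ*, let ψ_i be the self-map of C(Ω,ℝ) given by ψ_i(f)(ω) = Val_{I×J}[g_i(i',j',ω) + ⟨P_i(i',j')(ω,·), f⟩], where P_i is row-stochastic and ∑_i ‖g_i‖_∞ < ∞. Then lim_{n→∞}(ψ_1 ∘ ... ∘ ψ_n)(0) exists in C(Ω,ℝ). -/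
open Filter

/-- The value (in mixed strategies) of the finite zero-sum game with payoff `g`. -/
noncomputable def gameValue {I J : Type*} [Fintype I] [Fintype J] (g : I → J → ℝ) : ℝ :=
  ⨆ x : stdSimplex ℝ I, ⨅ y : stdSimplex ℝ J, ∑ i, ∑ j, (x : I → ℝ) i * (y : J → ℝ) j * g i j

/-- The composition `ψ 0 ∘ ψ 1 ∘ ... ∘ ψ (n-1)` of the first `n` operators. -/
def iterComp {Ω : Type*} (ψ : ℕ → (Ω → ℝ) → (Ω → ℝ)) : ℕ → (Ω → ℝ) → (Ω → ℝ)
  | 0 => id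
  | n + 1 => iterComp ψ n ∘ ψ n

section aux

variable {I J : Type*} [Fintype I] [Fintype J] [Nonempty I] [Nonempty J]

instance instNonemptyStdSimplex : Nonempty (stdSimplex ℝ I) := by
  classical
  exact ⟨⟨_, single_mem_stdSimplex ℝ (Classical.arbitrary I)⟩⟩

lemma payoff_const (c : ℝ) (x : stdSimplex ℝ I) (y : stdSimplex ℝ J) :
    ∑ i, ∑ j, (x : I → ℝ) i * (y : J → ℝ) j * c = c := by
  have h : ∀ i, ∑ j, (x : I → ℝ) i * (y : J → ℝ) j * c = (x : I → ℝ) i * c := by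
    intro i
    rw [← Finset.sum_mul, ← Finset.mul_sum, (show ∑ j, (y : J → ℝ) j = 1 from y.2.2), mul_one]
  rw [Finset.sum_congr rfl (fun i _ => h i), ← Finset.sum_mul, (show ∑ i, (x : I → ℝ) i = 1 from x.2.2), one_mul]

lemma payoff_abs_le (g : I → J → ℝ) {C : ℝ} (hg : ∀ i j, |g i j| ≤ C)
    (x : stdSimplex ℝ I) (y : stdSimplex ℝ J) :
    |∑ i, ∑ j, (x : I → ℝ) i * (y : J → ℝ) j * g i j| ≤ C := by
  calc |∑ i, ∑ j, (x : I → ℝ) i * (y : J → ℝ) j * g i j|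
      ≤ ∑ i, |∑ j, (x : I → ℝ) i * (y : J → ℝ) j * g i j| := Finset.abs_sum_le_sum_abs _ _
    _ ≤ ∑ i, ∑ j, |(x : I → ℝ) i * (y : J → ℝ) j * g i j| :=
        Finset.sum_le_sum fun i _ => Finset.abs_sum_le_sum_abs _ _
    _ ≤ ∑ i, ∑ j, (x : I → ℝ) i * (y : J → ℝ) j * C := by
        refine Finset.sum_le_sum fun i _ => Finset.sum_le_sum fun j _ => ?_
        rw [abs_mul, abs_mul, abs_of_nonneg (show 0 ≤ (x : I → ℝ) i from x.2.1 i),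
          abs_of_nonneg (show 0 ≤ (y : J → ℝ) j from y.2.1 j)]
        exact mul_le_mul_of_nonneg_left (hg i j) (mul_nonneg (x.2.1 i) (y.2.1 j))
    _ = C := payoff_const C x y

lemma payoff_le_payoff_add {g g' : I → J → ℝ} {c : ℝ} (h : ∀ i j, g i j ≤ g' i j + c)
    (x : stdSimplex ℝ I) (y : stdSimplex ℝ J) :
    ∑ i, ∑ j, (x : I → ℝ) i * (y : J → ℝ) j * g i j
      ≤ (∑ i, ∑ j, (x : I → ℝ) i * (y : J → ℝ) j * g' i j) + c := by
  have h1 : ∑ i, ∑ j, (x : I → ℝ) i * (y : J → ℝ) j * g i j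
      ≤ ∑ i, ∑ j, (x : I → ℝ) i * (y : J → ℝ) j * (g' i j + c) :=
    Finset.sum_le_sum fun i _ => Finset.sum_le_sum fun j _ =>
      mul_le_mul_of_nonneg_left (h i j) (mul_nonneg (x.2.1 i) (y.2.1 j))
  refine h1.trans (le_of_eq ?_)
  simp only [mul_add, Finset.sum_add_distrib]
  rw [payoff_const c x y]

lemma gameValue_le_add {g g' : I → J → ℝ} {c C C' : ℝ}
    (hg : ∀ i j, |g i j| ≤ C) (hg' : ∀ i j, |g' i j| ≤ C')
    (h : ∀ i j, g i j ≤ g' i j + c) : gameValue g ≤ gameValue g' + c := by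
  unfold gameValue
  have hbddb : ∀ (k : I → J → ℝ) (K : ℝ), (∀ i j, |k i j| ≤ K) → ∀ x : stdSimplex ℝ I,
      BddBelow (Set.range fun y : stdSimplex ℝ J =>
        ∑ i, ∑ j, (x : I → ℝ) i * (y : J → ℝ) j * k i j) := by
    rintro k K hk x
    refine ⟨-K, ?_⟩
    rintro r ⟨y, rfl⟩
    exact neg_le_of_abs_le (payoff_abs_le k hk x y)
  apply ciSup_le
  intro x
  have h1 : (⨅ y : stdSimplex ℝ J, ∑ i, ∑ j, (x : I → ℝ) i * (y : J → ℝ) j * g i j)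
      ≤ (⨅ y : stdSimplex ℝ J, ∑ i, ∑ j, (x : I → ℝ) i * (y : J → ℝ) j * g' i j) + c := by
    rw [← sub_le_iff_le_add]
    refine le_ciInf fun y => ?_
    have h2 := ciInf_le (hbddb g C hg x) y
    have h3 := payoff_le_payoff_add h x y
    linarith
  have hbdda : BddAbove (Set.range fun x : stdSimplex ℝ I =>
      ⨅ y : stdSimplex ℝ J, ∑ i, ∑ j, (x : I → ℝ) i * (y : J → ℝ) j * g' i j) := by
    refine ⟨C', ?_⟩
    rintro r ⟨x', rfl⟩
    have h4 := ciInf_le (hbddb g' C' hg' x') (Classical.arbitrary (stdSimplex ℝ J))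
    exact h4.trans (le_of_abs_le (payoff_abs_le g' hg' x' _))
  exact h1.trans (add_le_add_left (le_ciSup hbdda x) c)

lemma abs_gameValue_sub_le {g g' : I → J → ℝ} {c C C' : ℝ}
    (hg : ∀ i j, |g i j| ≤ C) (hg' : ∀ i j, |g' i j| ≤ C')
    (h : ∀ i j, |g i j - g' i j| ≤ c) : |gameValue g - gameValue g'| ≤ c := by
  rw [abs_sub_le_iff]
  constructor
  · have := gameValue_le_add hg hg' (fun i j => by have := abs_le.1 (h i j); linarith)
    linarith
  · have := gameValue_le_add hg' hg (fun i j => by have := abs_le.1 (h i j); linarith)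
    linarith

lemma gameValue_zero : gameValue (fun (_ : I) (_ : J) => (0 : ℝ)) = 0 := by
  unfold gameValue
  simp [ciInf_const, ciSup_const]

lemma abs_gameValue_le {g : I → J → ℝ} {C : ℝ} (hg : ∀ i j, |g i j| ≤ C) :
    |gameValue g| ≤ C := by
  have h := abs_gameValue_sub_le (g' := fun (_ : I) (_ : J) => (0 : ℝ)) (C' := 0) (c := C) hg
    (fun i j => by simp) (fun i j => by simpa using hg i j)
  rwa [gameValue_zero, sub_zero] at h

end aux

/-- for Shapley operators `ψ_i f ω = Val[g_i(i',j',ω) + ⟨P_i(i',j')(ω,·), f⟩]`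
with `P_i` row-stochastic and `∑_i ‖g_i‖_∞ < ∞`, the infinite composition
`lim_n (ψ_1 ∘ ... ∘ ψ_n)(0)` exists. -/
theorem shapley_infinite_composition (Ω I J : Type*) [Fintype Ω] [Fintype I] [Fintype J]
    [Nonempty Ω] [Nonempty I] [Nonempty J]
    (g : ℕ → I → J → Ω → ℝ) (P : ℕ → I → J → Ω → Ω → ℝ)
    (hP_nonneg : ∀ n i j ω ω', 0 ≤ P n i j ω ω')
    (hP_row : ∀ n i j ω, ∑ ω', P n i j ω ω' = 1)
    (M : ℕ → ℝ) (hM : ∀ n i j ω, |g n i j ω| ≤ M n) (hMs : Summable M)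
    (ψ : ℕ → (Ω → ℝ) → (Ω → ℝ))
    (hψ : ∀ n f ω, ψ n f ω = gameValue (fun i j => g n i j ω + ∑ ω', P n i j ω ω' * f ω')) :
    ∃ v : Ω → ℝ, Tendsto (fun n => iterComp ψ n (0 : Ω → ℝ)) atTop (nhds v) := by
  classical
  -- a bound for an arbitrary finite family of reals
  have bound : ∀ f : Ω → ℝ, ∃ B : ℝ, ∀ ω, |f ω| ≤ B := by
    intro f
    obtain ⟨B, hB⟩ := Finite.exists_le (fun ω => |f ω|)
    exact ⟨B, hB⟩
  -- transition sums are averages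
  have avg : ∀ n i j ω (f f' : Ω → ℝ) (c : ℝ), (∀ ω', |f ω' - f' ω'| ≤ c) →
      |(∑ ω', P n i j ω ω' * f ω') - ∑ ω', P n i j ω ω' * f' ω'| ≤ c := by
    intro n i j ω f f' c hc
    rw [← Finset.sum_sub_distrib]
    calc |∑ ω', (P n i j ω ω' * f ω' - P n i j ω ω' * f' ω')|
        ≤ ∑ ω', |P n i j ω ω' * f ω' - P n i j ω ω' * f' ω'| := Finset.abs_sum_le_sum_abs _ _
      _ ≤ ∑ ω', P n i j ω ω' * c := by
          refine Finset.sum_le_sum fun ω' _ => ?_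
          rw [← mul_sub, abs_mul, abs_of_nonneg (hP_nonneg n i j ω ω')]
          exact mul_le_mul_of_nonneg_left (hc ω') (hP_nonneg n i j ω ω')
      _ = c := by rw [← Finset.sum_mul, hP_row, one_mul]
  -- ψ n is nonexpansive
  have hnonexp : ∀ n (f f' : Ω → ℝ) (c : ℝ), (∀ ω, |f ω - f' ω| ≤ c) →
      ∀ ω, |ψ n f ω - ψ n f' ω| ≤ c := by
    intro n f f' c hc ω
    rw [hψ, hψ]
    obtain ⟨B, hB⟩ := bound f
    obtain ⟨B', hB'⟩ := bound f'
    refine abs_gameValue_sub_le (C := M n + B) (C' := M n + B')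
      (fun i j => ?_) (fun i j => ?_) (fun i j => ?_)
    · refine (abs_add_le _ _).trans (add_le_add (hM n i j ω) ?_)
      have := avg n i j ω f 0 B (by simpa using hB)
      simpa using this
    · refine (abs_add_le _ _).trans (add_le_add (hM n i j ω) ?_)
      have := avg n i j ω f' 0 B' (by simpa using hB')
      simpa using this
    · have h := avg n i j ω f f' c hc
      have : g n i j ω + (∑ ω', P n i j ω ω' * f ω')
          - (g n i j ω + ∑ ω', P n i j ω ω' * f' ω')
          = (∑ ω', P n i j ω ω' * f ω') - ∑ ω', P n i j ω ω' * f' ω' := by ring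
      rw [this]
      exact h
  -- iterComp ψ n is nonexpansive
  have hiter : ∀ n (f f' : Ω → ℝ) (c : ℝ), (∀ ω, |f ω - f' ω| ≤ c) →
      ∀ ω, |iterComp ψ n f ω - iterComp ψ n f' ω| ≤ c := by
    intro n
    induction n with
    | zero => intro f f' c hc ω; exact hc ω
    | succ n ih =>
      intro f f' c hc ω
      exact ih (ψ n f) (ψ n f') c (hnonexp n f f' c hc) ω
  -- |ψ n 0 ω| ≤ M n
  have hpsi0 : ∀ n ω, |ψ n 0 ω| ≤ M n := by
    intro n ω
    rw [hψ]
    refine abs_gameValue_le fun i j => ?_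
    simpa using hM n i j ω
  -- successive differences
  have hdiff : ∀ n ω, |iterComp ψ (n+1) (0 : Ω → ℝ) ω - iterComp ψ n (0 : Ω → ℝ) ω| ≤ M n := by
    intro n ω
    have : iterComp ψ (n+1) (0 : Ω → ℝ) = iterComp ψ n (ψ n 0) := rfl
    rw [this]
    exact hiter n (ψ n 0) 0 (M n) (fun ω' => by simpa using hpsi0 n ω') ω
  -- each coordinate converges
  have hconv : ∀ ω, ∃ l : ℝ, Tendsto (fun n => iterComp ψ n (0 : Ω → ℝ) ω) atTop (nhds l) := by
    intro ω
    have hcauchy : CauchySeq (fun n => iterComp ψ n (0 : Ω → ℝ) ω) := by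
      apply cauchySeq_of_summable_dist
      refine hMs.of_nonneg_of_le (fun n => dist_nonneg) fun n => ?_
      rw [Real.dist_eq, abs_sub_comm]
      exact hdiff n ω
    exact cauchySeq_tendsto_of_complete hcauchy
  choose v hv using hconv
  exact ⟨v, tendsto_pi_nhds.2 hv⟩
end
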